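/- Let T and T' be ordered trees with the same number of vertices such that rpl(T) = 1, T' has no pony-tail, and T' is copying T (at level 1). Then C(T',1) is copying C(T,2), i.e., C(T,2) is obtained from C(T',1) by appending a new rightmost leaf and deleting some other leaf. -/
import Mathlib


/-- An ordered (plane) tree: a root together with the list of subtrees of its
children.  The children are listed **rightmost first** (so the head of the
list is the rightmost child). -/
inductive OTree : Type
  | node : List OTree → OTree

namespace OTree

-- Number of vertices of an ordered tree.
mutual
  def size : OTree → ℕ
    | .node ts => 1 + sizeAux ts
  def sizeAux : List OTree → ℕ
    | [] => 0
    | t :: ts => size t + sizeAux ts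
end

/-- `rpl T` is the number of edges of the rightmost path of `T`
(the path from the root that always follows the rightmost child). -/
def rpl : OTree → ℕ
  | .node [] => 0
  | .node (t :: _) => 1 + rpl t

/-- `p T` removes the rightmost leaf of `T` (the endpoint of the rightmost
path).  On the one-vertex tree it is the identity (junk value). -/
def p : OTree → OTree
  | .node [] => .node []
  | .node (.node [] :: ts) => .node ts
  | .node (.node (c :: cs) :: ts) => .node (p (.node (c :: cs)) :: ts)

/-- `C T i` appends a new leaf as the rightmost child of the vertex at
level `i` on the rightmost path of `T` (the root has level 1).
Junk values are returned when `i = 0` or `i` exceeds `rpl T + 1`. -/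
def C : OTree → ℕ → OTree
  | t, 0 => t
  | .node ts, 1 => .node (.node [] :: ts)
  | .node [], _ + 2 => .node []
  | .node (t :: ts), n + 2 => .node (C t (n + 1) :: ts)

/-- The number of children of the parent of the rightmost leaf
(junk value `0` on the one-vertex tree, which has no such parent). -/
def rmlParentDeg : OTree → ℕ
  | .node [] => 0
  | .node (.node [] :: ts) => ts.length + 1
  | .node (.node (c :: cs) :: _) => rmlParentDeg (.node (c :: cs))

/-- `T` has the pony-tail if the rightmost child of the root has exactly one
child, which is a leaf. -/
def ponyTail : OTree → Prop
  | .node (.node [.node []] :: _) => True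
  | _ => False

end OTree

/-- `AppendLeaf T T'` holds when `T'` is obtained from `T` by attaching one
new leaf to some vertex of `T`, at some position among its children. -/
inductive AppendLeaf : OTree → OTree → Prop
  | root (l r : List OTree) :
      AppendLeaf (.node (l ++ r)) (.node (l ++ OTree.node [] :: r))
  | child (l r : List OTree) (t t' : OTree) :
      AppendLeaf t t' → AppendLeaf (.node (l ++ t :: r)) (.node (l ++ t' :: r))

/-- `DelApp T T'` holds when `T'` can be obtained from `T` by deleting one
leaf and then appending one new leaf somewhere (delete-and-append a leaf). -/
def DelApp (T T' : OTree) : Prop :=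
  ∃ S : OTree, AppendLeaf S T ∧ AppendLeaf S T'

/-- `CopyingAt T T' j` : `T` is copying `T'` at level `j`, i.e. `T'` is
obtained from `T` by appending a new leaf which becomes the rightmost leaf of
`T'` (namely forming `C T j`, whose rightmost path has `j` edges) and then
removing some other leaf. -/
def CopyingAt (T T' : OTree) (j : ℕ) : Prop :=
  T ≠ T' ∧ 1 ≤ j ∧ j ≤ T.rpl + 1 ∧ T'.rpl = j ∧ AppendLeaf T' (T.C j)

/-- `T` is copying `T'`. -/
def Copying (T T' : OTree) : Prop := ∃ j : ℕ, CopyingAt T T' j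


lemma appendLeaf_cases {A B : OTree} (h : AppendLeaf A B) :
    (∃ l r, A = .node (l ++ r) ∧ B = .node (l ++ OTree.node [] :: r)) ∨
    (∃ l r t t', AppendLeaf t t' ∧ A = .node (l ++ t :: r) ∧ B = .node (l ++ t' :: r)) := by
  cases h with
  | root l r => exact Or.inl ⟨l, r, rfl, rfl⟩
  | child l r t t' ht => exact Or.inr ⟨l, r, t, t', ht, rfl, rfl⟩

/-- Let `T` and `T'` be ordered trees with the same number of vertices such
that `rpl T = 1`, `T'` has no pony-tail, and `T'` is copying `T` (at level 1).
Then `C T' 1` is copying `C T 2`. -/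
theorem stmt_17 (T T' : OTree) (hsize : T.size = T'.size) (h1 : T.rpl = 1)
    (hpt : ¬ T'.ponyTail) (hcopy : CopyingAt T' T 1) :
    Copying (T'.C 1) (T.C 2) := by
  obtain ⟨hne, -, -, -, hA⟩ := hcopy
  obtain ⟨ts0⟩ := T
  obtain ⟨ts'⟩ := T'
  cases ts0 with
  | nil => simp [OTree.rpl] at h1
  | cons t ts =>
    obtain ⟨ct⟩ := t
    cases ct with
    | cons c cs =>
      exfalso
      simp only [OTree.rpl] at h1
      omega
    | nil =>
      have hC1 : OTree.C (.node ts') 1 = .node (.node [] :: ts') := by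
        simp [OTree.C]
      have hC2 : OTree.C (.node (OTree.node [] :: ts)) 2
          = .node (.node [.node []] :: ts) := by
        simp [OTree.C]
      rw [hC1] at hA
      refine ⟨2, ?_, one_le_two, ?_, ?_, ?_⟩
      · rw [hC1, hC2]
        intro h
        injection h with h
        injection h with h _
        injection h with h
        simp at h
      · simp [hC1, OTree.rpl]
      · rw [hC2]; simp [OTree.rpl]
      · rw [hC2]
        have hCC : OTree.C (OTree.C (.node ts') 1) 2
            = .node (.node [.node []] :: ts') := by
          rw [hC1]; simp [OTree.C]
        rw [hCC]
        rcases appendLeaf_cases hA with ⟨l, r, hl, hr⟩ | ⟨l, r, t, t', ht, hl, hr⟩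
        · cases l with
          | nil =>
            simp only [List.nil_append] at hl hr
            rw [OTree.node.injEq] at hl hr
            rw [← hl, List.cons.injEq] at hr
            obtain ⟨-, rfl⟩ := hr
            exact AppendLeaf.root [.node [.node []]] ts
          | cons u l' =>
            rw [List.cons_append, OTree.node.injEq, List.cons.injEq] at hl hr
            obtain ⟨rfl, rfl⟩ := hl
            obtain ⟨-, rfl⟩ := hr
            exact AppendLeaf.root (.node [.node []] :: l') r
        · cases l with
          | nil =>
            exfalso
            simp only [List.nil_append] at hl hr
            rw [OTree.node.injEq, List.cons.injEq] at hl hr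
            obtain ⟨rfl, rfl⟩ := hl
            obtain ⟨rfl, -⟩ := hr
            rcases appendLeaf_cases ht with ⟨l0, r0, h0, h0'⟩ | ⟨l0, r0, s, s', hs, h0, h0'⟩
            · rw [OTree.node.injEq] at h0'
              simp at h0'
            · rw [OTree.node.injEq] at h0
              simp at h0
          | cons u l' =>
            rw [List.cons_append, OTree.node.injEq, List.cons.injEq] at hl hr
            obtain ⟨rfl, rfl⟩ := hl
            obtain ⟨-, rfl⟩ := hr
            exact AppendLeaf.child (.node [.node []] :: l') r t t' ht
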